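/- Define m(ξ) = 2ξ·coth(ξ) − ξ²·csch²(ξ) − 1 for ξ ≠ 0, where coth(x) = cosh(x)/sinh(x) and csch(x) = 1/sinh(x), and write ⟨ξ⟩ = √(1+ξ²). Then there exist constants c, C > 0 such that for all real ξ ≠ 0, c·ξ²/⟨ξ⟩ ≤ m(ξ) ≤ C·ξ²/⟨ξ⟩. In particular m(ξ) > 0 for all ξ ≠ 0. -/

import Mathlib

/-- Hyperbolic cotangent. -/
noncomputable def coth (x : ℝ) : ℝ := Real.cosh x / Real.sinh x

/-- Hyperbolic cosecant. -/
noncomputable def csch (x : ℝ) : ℝ := 1 / Real.sinh x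

/-- Japanese bracket `⟨ξ⟩ = √(1+ξ²)`. -/
noncomputable def jb (ξ : ℝ) : ℝ := Real.sqrt (1 + ξ ^ 2)

/-- The group-velocity symbol `m(ξ) = 2ξcoth(ξ) − ξ²csch²(ξ) − 1`. -/
noncomputable def mfun (ξ : ℝ) : ℝ := 2 * ξ * coth ξ - ξ ^ 2 * csch ξ ^ 2 - 1

lemma sinh_le_mul_cosh {x : ℝ} (hx : 0 ≤ x) : Real.sinh x ≤ x * Real.cosh x := by
  have hderiv : ∀ t : ℝ, HasDerivAt (fun t : ℝ => t * Real.cosh t - Real.sinh t)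
      (t * Real.sinh t) t := by
    intro t
    have h := ((hasDerivAt_id t).mul (Real.hasDerivAt_cosh t)).sub (Real.hasDerivAt_sinh t)
    refine h.congr_deriv ?_
    simp only [id_eq]
    ring
  have hmono : MonotoneOn (fun t : ℝ => t * Real.cosh t - Real.sinh t) (Set.Ici 0) := by
    apply monotoneOn_of_deriv_nonneg (convex_Ici 0)
    · exact ((continuous_id.mul Real.continuous_cosh).sub Real.continuous_sinh).continuousOn
    · intro t _
      exact (hderiv t).differentiableAt.differentiableWithinAt
    · intro t ht
      rw [(hderiv t).deriv]
      rw [interior_Ici, Set.mem_Ioi] at ht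
      have : 0 ≤ Real.sinh t := Real.sinh_nonneg_iff.2 ht.le
      nlinarith
  have h0 := hmono (Set.self_mem_Ici (a := (0:ℝ))) hx hx
  simp at h0
  linarith

lemma cosh_ge_one_add (x : ℝ) : 1 + x ^ 2 / 2 ≤ Real.cosh x := by
  have h1 : Real.cosh x = 2 * Real.sinh (x / 2) ^ 2 + 1 := by
    have h := Real.cosh_two_mul (x / 2)
    have h2 := Real.cosh_sq (x / 2)
    rw [show 2 * (x / 2) = x by ring] at h
    linarith
  have h3 : (x / 2) ^ 2 ≤ Real.sinh (x / 2) ^ 2 := by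
    rcases le_total 0 (x / 2) with h | h
    · have := Real.self_le_sinh_iff.2 h
      nlinarith
    · have h4 : Real.sinh (x / 2) ≤ x / 2 := Real.sinh_le_self_iff.2 h
      have h5 : Real.sinh (x / 2) ≤ 0 := Real.sinh_nonpos_iff.2 h
      nlinarith
  nlinarith

lemma mfun_neg (ξ : ℝ) : mfun (-ξ) = mfun ξ := by
  unfold mfun coth csch
  simp [Real.sinh_neg, Real.cosh_neg]
  ring

lemma jb_neg (ξ : ℝ) : jb (-ξ) = jb ξ := by unfold jb; ring_nf

lemma jb_pos (ξ : ℝ) : 0 < jb ξ := Real.sqrt_pos.2 (by positivity)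

lemma one_le_jb (ξ : ℝ) : 1 ≤ jb ξ := by
  rw [show (1:ℝ) = Real.sqrt 1 by simp]
  exact Real.sqrt_le_sqrt (by nlinarith)

set_option maxHeartbeats 1600000 in
lemma bound_aux (ξ s c : ℝ) (hξ : 0 < ξ) (hs : 0 < s) (hξs : ξ ≤ s)
    (hsc : s ≤ ξ * c) (hc1 : 1 ≤ c) (hcsq : c ^ 2 = s ^ 2 + 1)
    (hcq : 1 + ξ ^ 2 / 2 ≤ c)
    (hsmall : ξ ≤ 2 → c ≤ 21/5) (hbig : 2 ≤ ξ → c ≤ 2 * s) :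
    (1/40) * ξ ^ 2 / jb ξ ≤ (2 * ξ * s * c - ξ ^ 2 - s ^ 2) / s ^ 2 ∧
      (2 * ξ * s * c - ξ ^ 2 - s ^ 2) / s ^ 2 ≤ 6 * ξ ^ 2 / jb ξ := by
  have hcs : s ≤ c := by nlinarith
  have hjb : 0 < jb ξ := jb_pos ξ
  have hjb1 : 1 ≤ jb ξ := one_le_jb ξ
  have hs2 : (0:ℝ) < s ^ 2 := by positivity
  have hNlow : ξ ^ 4 / 2 ≤ 2 * ξ * s * c - ξ ^ 2 - s ^ 2 := by
    nlinarith [mul_pos hξ hs, mul_pos (mul_pos hξ hs) (lt_of_lt_of_le one_pos hc1)]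
  rcases le_total ξ 2 with h2 | h2
  · -- small case
    have hc42 : c ≤ 21/5 := hsmall h2
    have hs2up : s ^ 2 ≤ (441/25) * ξ ^ 2 := by
      have h1 : s * s ≤ (ξ * c) * (ξ * c) := by
        apply mul_le_mul hsc hsc hs.le (by positivity)
      have hcc : c * c ≤ 441/25 := by nlinarith
      nlinarith [mul_le_mul_of_nonneg_left hcc (by positivity : (0:ℝ) ≤ ξ * ξ)]
    constructor
    · have step1 : (1/40) * ξ ^ 2 / jb ξ ≤ (1/40) * ξ ^ 2 :=
        div_le_self (by positivity) hjb1
      have step2 : (1/40) * ξ ^ 2 ≤ (2 * ξ * s * c - ξ ^ 2 - s ^ 2) / s ^ 2 := by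
        rw [le_div_iff₀ hs2]
        nlinarith
      linarith
    · have hNup : 2 * ξ * s * c - ξ ^ 2 - s ^ 2 ≤ 2 * ξ ^ 2 * s ^ 2 := by
        have h1 : 2 * ξ * s * c ≤ 2 * ξ * (ξ * c) * c := by nlinarith
        nlinarith
      have hjbup : jb ξ ≤ 3 := by
        rw [show (3:ℝ) = Real.sqrt 9 by
          rw [show (9:ℝ) = 3^2 by norm_num, Real.sqrt_sq]; norm_num]
        exact Real.sqrt_le_sqrt (by nlinarith)
      rw [div_le_div_iff₀ hs2 hjb]
      have hNpos : 0 ≤ 2 * ξ * s * c - ξ ^ 2 - s ^ 2 := le_trans (by positivity) hNlow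
      calc (2 * ξ * s * c - ξ ^ 2 - s ^ 2) * jb ξ
          ≤ (2 * ξ ^ 2 * s ^ 2) * 3 := mul_le_mul hNup hjbup hjb.le (by positivity)
        _ = 6 * ξ ^ 2 * s ^ 2 := by ring
  · -- large case
    have hc2s : c ≤ 2 * s := hbig h2
    have hNlow2 : ξ * s ^ 2 ≤ 2 * ξ * s * c - ξ ^ 2 - s ^ 2 := by
      have h1 : 2 * ξ * s * s ≤ 2 * ξ * s * c :=
        mul_le_mul_of_nonneg_left hcs (by positivity)
      have hξ2s2 : ξ ^ 2 ≤ s ^ 2 := by nlinarith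
      have h2s : 2 * s ^ 2 ≤ ξ * s ^ 2 := by
        nlinarith [mul_nonneg (sub_nonneg.2 h2) (sq_nonneg s)]
      nlinarith
    constructor
    · have hjbξ : ξ ≤ jb ξ := by
        unfold jb
        rw [Real.le_sqrt hξ.le (by positivity)]
        nlinarith
      have step1 : (1/40) * ξ ^ 2 / jb ξ ≤ ξ ^ 2 / jb ξ := by
        rw [div_le_div_iff_of_pos_right hjb]
        nlinarith
      have step2 : ξ ^ 2 / jb ξ ≤ ξ := by
        rw [div_le_iff₀ hjb]; nlinarith
      have step3 : ξ ≤ (2 * ξ * s * c - ξ ^ 2 - s ^ 2) / s ^ 2 := by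
        rw [le_div_iff₀ hs2]; nlinarith
      linarith
    · have hNup : 2 * ξ * s * c - ξ ^ 2 - s ^ 2 ≤ 4 * ξ * s ^ 2 := by nlinarith
      have hjbup : jb ξ ≤ (3/2) * ξ := by
        rw [show (3/2) * ξ = Real.sqrt (((3/2)*ξ)^2) by
          rw [Real.sqrt_sq (by positivity)]]
        exact Real.sqrt_le_sqrt (by nlinarith)
      rw [div_le_div_iff₀ hs2 hjb]
      have hNpos : 0 ≤ 2 * ξ * s * c - ξ ^ 2 - s ^ 2 := le_trans (by positivity) hNlow
      calc (2 * ξ * s * c - ξ ^ 2 - s ^ 2) * jb ξ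
          ≤ (4 * ξ * s ^ 2) * ((3/2) * ξ) := mul_le_mul hNup hjbup hjb.le (by positivity)
        _ = 6 * ξ ^ 2 * s ^ 2 := by ring

lemma main_pos (ξ : ℝ) (hξ : 0 < ξ) :
    (1/40) * ξ ^ 2 / jb ξ ≤ mfun ξ ∧ mfun ξ ≤ 6 * ξ ^ 2 / jb ξ := by
  have hs : 0 < Real.sinh ξ := Real.sinh_pos_iff.2 hξ
  have hm : mfun ξ =
      (2 * ξ * Real.sinh ξ * Real.cosh ξ - ξ ^ 2 - Real.sinh ξ ^ 2) / Real.sinh ξ ^ 2 := by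
    unfold mfun coth csch
    field_simp
  rw [hm]
  apply bound_aux ξ (Real.sinh ξ) (Real.cosh ξ) hξ hs
    (Real.self_lt_sinh_iff.2 hξ).le (sinh_le_mul_cosh hξ.le) (Real.one_le_cosh ξ)
    (Real.cosh_sq ξ) (cosh_ge_one_add ξ)
  · intro h2
    have hmon : Real.cosh ξ ≤ Real.cosh 2 := by
      rw [Real.cosh_le_cosh, abs_of_pos hξ, abs_of_pos (by norm_num : (0:ℝ) < 2)]
      exact h2
    have he : Real.exp 2 ≤ 37/5 := by
      have h1 := Real.exp_one_lt_d9
      have h3 : Real.exp 2 = Real.exp 1 * Real.exp 1 := by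
        rw [← Real.exp_add]; norm_num
      nlinarith [Real.exp_pos 1]
    have he2 : Real.exp (-2) ≤ 1 := Real.exp_le_one_iff.mpr (by norm_num)
    have hce := Real.cosh_eq 2
    rw [hce] at hmon
    linarith
  · intro h2
    have h1 : Real.exp (-ξ) * 3 ≤ Real.exp ξ := by
      have hadd := Real.add_one_le_exp (2 * ξ)
      have h3 : Real.exp ξ * Real.exp ξ = Real.exp (2*ξ) := by
        rw [← Real.exp_add]; ring_nf
      have h4 : Real.exp (-ξ) = 1 / Real.exp ξ := by
        rw [Real.exp_neg]; exact inv_eq_one_div _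
      rw [h4, div_mul_eq_mul_div, div_le_iff₀ (Real.exp_pos ξ)]
      nlinarith [Real.exp_pos ξ]
    have hse := Real.sinh_eq ξ
    have hce := Real.cosh_eq ξ
    rw [hse, hce]
    linarith

theorem mfun_two_sided_bound :
    ∃ c C : ℝ, 0 < c ∧ 0 < C ∧ ∀ ξ : ℝ, ξ ≠ 0 →
      c * ξ ^ 2 / jb ξ ≤ mfun ξ ∧ mfun ξ ≤ C * ξ ^ 2 / jb ξ := by
  refine ⟨1/40, 6, by norm_num, by norm_num, fun ξ hξ => ?_⟩
  rcases lt_or_gt_of_ne hξ with h | h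
  · have h2 := main_pos (-ξ) (by linarith)
    rw [mfun_neg, jb_neg, neg_pow] at h2
    simpa using h2
  · exact main_pos ξ h
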